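/- arXiv:2406.10414 — 3 statements merged into one kernel-verified Lean document; each statement's English description precedes it below -/
import Mathlib

section
/- If ρ is a root of f_n(x) = x^4 - n x^3 - 6 x^2 + n x + 1 with ρ ∉ {0, 1, -1}, then (ρ-1)/(ρ+1) is also a root of f_n. -/
theorem stmt_1 {K : Type*} [Field K] (n : ℤ) (ρ : K)
    (h0 : ρ ≠ 0) (h1 : ρ ≠ 1) (hm1 : ρ ≠ -1)
    (hroot : ρ ^ 4 - n * ρ ^ 3 - 6 * ρ ^ 2 + n * ρ + 1 = 0) :
    ((ρ - 1) / (ρ + 1)) ^ 4 - n * ((ρ - 1) / (ρ + 1)) ^ 3 -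
      6 * ((ρ - 1) / (ρ + 1)) ^ 2 + n * ((ρ - 1) / (ρ + 1)) + 1 = 0 := by
  have hp1 : ρ + 1 ≠ 0 := fun h => hm1 (by linear_combination h)
  have hs : (ρ - 1) / (ρ + 1) * (ρ + 1) = ρ - 1 := div_mul_cancel₀ _ hp1
  have h4 : (ρ + 1) ^ 4 ≠ 0 := pow_ne_zero _ hp1
  apply mul_right_cancel₀ h4
  rw [zero_mul]
  linear_combination (-4 : K) * hroot + (((ρ - 1) / (ρ + 1)) ^ 3 * (ρ + 1) ^ 3
      - (n : K) * ((ρ - 1) / (ρ + 1)) ^ 2 * (ρ + 1) ^ 3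
      - 6 * ((ρ - 1) / (ρ + 1)) * (ρ + 1) ^ 3 + (n : K) * (ρ + 1) ^ 3
      + ((ρ - 1) / (ρ + 1)) ^ 2 * (ρ - 1) * (ρ + 1) ^ 2
      - (n : K) * ((ρ - 1) / (ρ + 1)) * (ρ - 1) * (ρ + 1) ^ 2
      - 6 * (ρ - 1) * (ρ + 1) ^ 2
      + ((ρ - 1) / (ρ + 1)) * (ρ - 1) ^ 2 * (ρ + 1)
      - (n : K) * (ρ - 1) ^ 2 * (ρ + 1)
      + (ρ - 1) ^ 3) * hs
end

section
/- Let n ≡ 2 (mod 4) or n ≡ 8 (mod 16) be a positive integer with n² + 16 = d·y², d squarefree. Then n and y are both even, and setting n = 2n₁, y = 2y₁, the element (n₁ + y₁√d)/2 is an algebraic integer of ℚ(√d) with norm -1. -/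
theorem stmt_8 (n y d : ℕ) (hn : 0 < n) (hy : 0 < y) (hd0 : 0 < d)
    (hd : Squarefree d) (hcong : n % 4 = 2 ∨ n % 16 = 8)
    (heq : n ^ 2 + 16 = d * y ^ 2) :
    2 ∣ n ∧ 2 ∣ y ∧
      IsIntegral ℤ ((((n / 2 : ℕ) : ℝ) + ((y / 2 : ℕ) : ℝ) * Real.sqrt d) / 2) ∧
      ((((n / 2 : ℕ) : ℝ) + ((y / 2 : ℕ) : ℝ) * Real.sqrt d) / 2) *
        ((((n / 2 : ℕ) : ℝ) - ((y / 2 : ℕ) : ℝ) * Real.sqrt d) / 2) = -1 := by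
  have h2n : 2 ∣ n := by omega
  have h2y : 2 ∣ y := by
    by_contra h
    obtain ⟨m, rfl⟩ : ∃ m, y = 2*m+1 := ⟨y/2, by omega⟩
    have hexp : d * (2*m+1)^2 = 4*(d*(m*m+m)) + d := by ring
    have h4 : 4 ∣ d := by
      rcases hcong with h1 | h1
      · obtain ⟨k, rfl⟩ : ∃ k, n = 4*k+2 := ⟨n/4, by omega⟩
        have h2 : (4*k+2)^2 = 4*(4*k*k+4*k+1) := by ring
        omega
      · obtain ⟨k, rfl⟩ : ∃ k, n = 16*k+8 := ⟨n/16, by omega⟩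
        have h2 : (16*k+8)^2 = 4*(64*k*k+64*k+16) := by ring
        omega
    have := hd 2 (by omega)
    simp [Nat.isUnit_iff] at this
  obtain ⟨a, rfl⟩ := h2n
  obtain ⟨b, rfl⟩ := h2y
  rw [show 2*a/2 = a from by omega, show 2*b/2 = b from by omega]
  have key : a^2 + 4 = d * b^2 := by
    have h1 : (2*a)^2 = 4*a^2 := by ring
    have h2 : d*(2*b)^2 = 4*(d*b^2) := by ring
    omega
  have keyR : ((a:ℝ))^2 + 4 = (d:ℝ) * (b:ℝ)^2 := by exact_mod_cast key
  have hsd : Real.sqrt d * Real.sqrt d = (d:ℝ) := Real.mul_self_sqrt (by positivity)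
  refine ⟨⟨a, rfl⟩, ⟨b, rfl⟩, ?_, ?_⟩
  · refine ⟨Polynomial.X^2 - Polynomial.C (a:ℤ) * Polynomial.X - Polynomial.C 1, ?_, ?_⟩
    · monicity!
    · simp only [Polynomial.eval₂_sub, Polynomial.eval₂_mul, Polynomial.eval₂_pow,
        Polynomial.eval₂_X, Polynomial.eval₂_C]
      rw [show (algebraMap ℤ ℝ) (a:ℤ) = (a:ℝ) by simp, show (algebraMap ℤ ℝ) 1 = (1:ℝ) by simp]
      linear_combination (-(1:ℝ)/4)*keyR + ((b:ℝ)^2/4)*hsd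
  · linear_combination keyR/4 - ((b:ℝ)^2/4)*hsd
end

section
/- Let t be an integer and define sequences u and v over ℤ by u_0=0, u_1=1, u_{j+2}=t·u_{j+1}+u_j and v_0=2, v_1=t, v_{j+2}=t·v_{j+1}+v_j. Suppose ε·ε̄ = -1 (i.e., norm -1 case). If r₁ divides r₂ and r₂/r₁ is even and positive, then any prime p dividing v_{r₁} satisfies v_{r₂} ≡ 2 or -2 (mod p). -/
namespace Stmt13Aux

def U (t : ℤ) : ℕ → ℤ
  | 0 => 0
  | 1 => 1
  | (n+2) => t * U t (n+1) + U t n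

def V (t : ℤ) : ℕ → ℤ
  | 0 => 2
  | 1 => t
  | (n+2) => t * V t (n+1) + V t n

variable (t : ℤ)

lemma U_zero : U t 0 = 0 := rfl
lemma U_one : U t 1 = 1 := rfl
lemma U_rec (n : ℕ) : U t (n+2) = t * U t (n+1) + U t n := rfl
lemma V_zero : V t 0 = 2 := rfl
lemma V_one : V t 1 = t := rfl
lemma V_rec (n : ℕ) : V t (n+2) = t * V t (n+1) + V t n := rfl

lemma E : ∀ n : ℕ, V t n * V t (n+2) - V t (n+1)^2 = (-1)^n * (t^2+4) := by
  intro n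
  induction n with
  | zero => rw [V_rec t 0]; norm_num [V_zero, V_one]; ring
  | succ n ih =>
    rw [V_rec t (n+1), V_rec t n] at *
    linear_combination (-1 : ℤ) * ih

lemma G : ∀ n : ℕ, U t (n+2) * V t n - U t (n+1) * V t (n+1) = t * (-1)^n := by
  intro n
  induction n with
  | zero => rw [U_rec t 0]; norm_num [U_zero, U_one, V_zero, V_one]; ring
  | succ n ih =>
    rw [U_rec t (n+1), U_rec t n, V_rec t n] at *
    linear_combination (-1 : ℤ) * ih

lemma F : ∀ n : ℕ, U t (n+2) * V t (n+1) - U t (n+1) * V t (n+2) = -2 * (-1)^n := by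
  intro n
  induction n with
  | zero => rw [U_rec t 0, V_rec t 0]; norm_num [U_zero, U_one, V_zero, V_one]
  | succ n ih =>
    rw [U_rec t (n+1), U_rec t n, V_rec t (n+1), V_rec t n] at *
    linear_combination (-1 : ℤ) * ih

lemma pairD : ∀ n : ℕ, V t (2*n) = (V t n)^2 - 2*(-1)^n ∧
    V t (2*n+1) = V t n * V t (n+1) - t * (-1)^n := by
  intro n
  induction n with
  | zero =>
    constructor
    · norm_num [V_zero]
    · norm_num [V_zero, V_one]; ring
  | succ n ih =>
    have h1 : V t (2*n+2) = V t (n+1)^2 + 2*(-1)^n := by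
      rw [V_rec t (2*n), ih.1, ih.2]
      linear_combination E t n - V t n * V_rec t n
    have h2 : V t (2*n+3) = V t (n+1) * V t (n+2) + t*(-1)^n := by
      rw [show 2*n+3 = 2*n+1+2 by omega, V_rec t (2*n+1),
        show 2*n+1+1 = 2*n+2 by omega, h1, ih.2]
      linear_combination (-(V t (n+1))) * V_rec t n
    constructor
    · rw [show 2*(n+1) = 2*n+2 by omega, h1]; ring
    · rw [show 2*(n+1)+1 = 2*n+3 by omega, h2, show n+1+1 = n+2 by omega]; ring

lemma pairU : ∀ n : ℕ, U t (2*n) = U t n * V t n ∧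
    U t (2*n+1) = U t (n+1) * V t n - (-1)^n := by
  intro n
  induction n with
  | zero => constructor <;> norm_num [U_zero, U_one, V_zero]
  | succ n ih =>
    have h1 : U t (2*n+2) = U t (n+1) * V t (n+1) := by
      rw [U_rec t (2*n), ih.1, ih.2]
      linear_combination G t n - V t n * U_rec t n
    have h2 : U t (2*n+3) = U t (n+2) * V t (n+1) + (-1)^n := by
      rw [show 2*n+3 = 2*n+1+2 by omega, U_rec t (2*n+1),
        show 2*n+1+1 = 2*n+2 by omega, h1, ih.2]
      linear_combination (-1 : ℤ) * F t n - U t (n+1) * V_rec t n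
    constructor
    · rw [show 2*(n+1) = 2*n+2 by omega, h1]
    · rw [show 2*(n+1)+1 = 2*n+3 by omega, h2, show n+1+1 = n+2 by omega]; ring


lemma add_formula : ∀ j a : ℕ, V t (a + j + 1) = U t (j+1) * V t (a+1) + U t j * V t a := by
  have H : ∀ j a : ℕ, (V t (a + j + 1) = U t (j+1) * V t (a+1) + U t j * V t a) ∧
      (V t (a + j + 2) = U t (j+2) * V t (a+1) + U t (j+1) * V t a) := by
    intro j
    induction j with
    | zero =>
      intro a
      constructor
      · norm_num [U_zero, U_one]
      · rw [V_rec t a, U_rec t 0]; norm_num [U_zero, U_one]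
    | succ n ih =>
      intro a
      refine ⟨(ih a).2, ?_⟩
      have h3 : V t (a + n + 3) = t * V t (a + n + 2) + V t (a + n + 1) := V_rec t (a + n + 1)
      have goal : V t (a + n + 3) = U t (n+3) * V t (a+1) + U t (n+2) * V t a := by
        rw [h3, (ih a).1, (ih a).2, U_rec t (n+1), U_rec t n]
        ring
      exact goal
  intro j a
  exact (H j a).1

lemma dvd_odd : ∀ k m : ℕ, V t m ∣ V t ((2*k+1)*m) := by
  intro k
  induction k with
  | zero => intro m; simpa using dvd_refl (V t m)
  | succ n ih =>
    intro m
    rcases m with _ | m'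
    · simpa using dvd_refl (V t 0)
    · set m := m' + 1 with hm
      have hidx : (2*(n+1)+1)*m = (2*n+1)*m + (2*m'+1) + 1 := by
        have hr : (2*(n+1)+1)*m = (2*n+1)*m + 2*m := by ring
        omega
      rw [hidx, add_formula t (2*m'+1) ((2*n+1)*m)]
      apply dvd_add
      · have hU : U t (2*m'+1+1) = U t m * V t m := by
          rw [show 2*m'+1+1 = 2*(m'+1) by omega]
          exact (pairU t (m'+1)).1
        rw [hU]
        exact ⟨U t m * V t ((2*n+1)*m + 1), by ring⟩
      · exact dvd_mul_of_dvd_right (ih m) _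

lemma key (p : ℕ) (m : ℕ) :
    ∀ k : ℕ, 0 < k → (p:ℤ) ∣ V t m →
      (V t (2*(k*m)) ≡ 2 [ZMOD p] ∨ V t (2*(k*m)) ≡ -2 [ZMOD p]) := by
  intro k
  induction k using Nat.strong_induction_on with
  | _ k ih =>
    intro hk hdvd
    rcases Nat.even_or_odd k with ⟨j, hj⟩ | ⟨j, hj⟩
    · -- k = j + j, j > 0
      have hj0 : 0 < j := by omega
      have IH := ih j (by omega) hj0 hdvd
      have hVN2 : V t (2*(j*m)) ^ 2 ≡ 4 [ZMOD p] := by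
        rcases IH with h | h
        · simpa using h.pow 2
        · simpa using h.pow 2
      have hNe : Even (2*(j*m)) := ⟨j*m, by omega⟩
      have hdb := (pairD t (2*(j*m))).1
      rw [hNe.neg_one_pow] at hdb
      left
      have hidx : 2*(k*m) = 2*(2*(j*m)) := by subst hj; ring
      rw [hidx, hdb]
      calc V t (2*(j*m)) ^ 2 - 2 * 1 ≡ 4 - 2 * 1 [ZMOD p] := hVN2.sub_right _
        _ = 2 := by norm_num
    · -- k odd
      have hp2 : (p:ℤ) ∣ V t (k*m) := by
        refine hdvd.trans ?_
        rw [hj]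
        exact dvd_odd t j m
      have h0 : V t (k*m) ≡ 0 [ZMOD p] := (Int.modEq_zero_iff_dvd).mpr hp2
      have hdb := (pairD t (k*m)).1
      have hcong : V t (2*(k*m)) ≡ 0^2 - 2*(-1:ℤ)^(k*m) [ZMOD p] := by
        rw [hdb]; exact (h0.pow 2).sub_right _
      rcases Nat.even_or_odd (k*m) with he | ho
      · right
        rw [he.neg_one_pow] at hcong
        simpa using hcong
      · left
        rw [ho.neg_one_pow] at hcong
        simpa using hcong

lemma veq (v : ℕ → ℤ) (hv0 : v 0 = 2) (hv1 : v 1 = t)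
    (hrec : ∀ j : ℕ, v (j + 2) = t * v (j + 1) + v j) : ∀ n, v n = V t n := by
  have H : ∀ n, v n = V t n ∧ v (n+1) = V t (n+1) := by
    intro n
    induction n with
    | zero => exact ⟨by rw [hv0, V_zero], by rw [hv1, V_one]⟩
    | succ n ih =>
      refine ⟨ih.2, ?_⟩
      rw [hrec n, V_rec t n, ih.1, ih.2]
  intro n
  exact (H n).1

end Stmt13Aux

theorem stmt_13 (t : ℤ) (v : ℕ → ℤ) (hv0 : v 0 = 2) (hv1 : v 1 = t)
    (hrec : ∀ j : ℕ, v (j + 2) = t * v (j + 1) + v j)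
    (r₁ r₂ : ℕ) (hr₁ : 0 < r₁) (hdvd : r₁ ∣ r₂) (heven : Even (r₂ / r₁))
    (hpos : 0 < r₂ / r₁) (p : ℕ) (hp : p.Prime) (hpdvd : (p : ℤ) ∣ v r₁) :
    v r₂ ≡ 2 [ZMOD p] ∨ v r₂ ≡ -2 [ZMOD p] := by
  obtain ⟨c, hc⟩ := heven
  have hc0 : 0 < c := by omega
  have hr2 : r₂ = 2*(c*r₁) := by
    have h := Nat.div_mul_cancel hdvd
    calc r₂ = r₂ / r₁ * r₁ := h.symm
      _ = (c + c) * r₁ := by rw [hc]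
      _ = 2*(c*r₁) := by ring
  have hVr : (p:ℤ) ∣ Stmt13Aux.V t r₁ := by
    rwa [Stmt13Aux.veq t v hv0 hv1 hrec r₁] at hpdvd
  have hkey := Stmt13Aux.key t p r₁ c hc0 hVr
  rw [Stmt13Aux.veq t v hv0 hv1 hrec r₂, hr2]
  exact hkey
end
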